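/- For every m ≥ 1 and every n with 0 ≤ n ≤ m, the coefficient of zⁿ in the formal power series expansion (in ℤ[[q,z]]) of the finite continued fraction C_m(q,z) = 1/(1 − a₁/(1 − a₂/(⋯/(1 − a_m)))), where the k-th partial numerator is a_k = z·q^{binomial(k−1,2)} for 1 ≤ k ≤ m, equals Σ_{r≥0} f_r(n) q^r. In other words, the generating function Σ_{n,r≥0} f_r(n) zⁿ q^r is represented by the infinite continued fraction 1/(1 − z/(1 − z/(1 − zq/(1 − zq³/(1 − zq⁶/⋯))))), whose n-th numerator is z·q^{binomial(n,2)}. -/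

import Mathlib

/-- `Avoids132 a` says the finite sequence `a` contains no (132) pattern. -/
def Avoids132 {m : ℕ} (a : Fin m → ℕ) : Prop :=
  ∀ i j k : Fin m, i < j → j < k → ¬ (a i < a k ∧ a k < a j)

/-- `count123 a` is the number of (123) patterns of `a`. -/
def count123 {m : ℕ} (a : Fin m → ℕ) : ℕ :=
  (Finset.univ.filter (fun t : Fin m × Fin m × Fin m =>
    t.1 < t.2.1 ∧ t.2.1 < t.2.2 ∧ a t.1 < a t.2.1 ∧ a t.2.1 < a t.2.2)).card

/-- `f r n` is the number of 132-avoiding permutations of `{1,…,n}` having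
exactly `r` (123) patterns. -/
noncomputable def f (r n : ℕ) : ℕ :=
  Nat.card {π : Equiv.Perm (Fin n) //
    Avoids132 (fun i => (π i : ℕ)) ∧ count123 (fun i => (π i : ℕ)) = r}

/-- The finite continued fraction `1/(1 - a₁/(1 - a₂/(⋯/(1 - a_m))))` with
partial numerators `a₁, a₂, …` (each a power series with zero constant term),
defined recursively by `C = 1/(1 - a₁·C')` where `C'` is the fraction with
numerators `a₂,…,a_m`; the inverse of `1 - a₁·C'` (whose constant term is the
unit `1`) is taken via `MvPowerSeries.invOfUnit`. -/
noncomputable def cfrac : List (MvPowerSeries (Fin 2) ℤ) → MvPowerSeries (Fin 2) ℤ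
  | [] => 1
  | a :: rest => MvPowerSeries.invOfUnit (1 - a * cfrac rest) 1

open Finset Equiv

set_option maxRecDepth 1000000

/-- number of noninversions (increasing pairs) -/
def noninv {m : ℕ} (a : Fin m → ℕ) : ℕ :=
  (Finset.univ.filter (fun t : Fin m × Fin m => t.1 < t.2 ∧ a t.1 < a t.2)).card

/-- combined statistic -/
def stat (t s : ℕ) {n : ℕ} (a : Fin n → ℕ) : ℕ := count123 a + t * noninv a + s * n

open scoped Classical in
/-- refined count -/
noncomputable def hcount (t s r n : ℕ) : ℕ :=
  (Finset.univ.filter (fun π : Equiv.Perm (Fin n) =>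
    Avoids132 (fun i => (π i : ℕ)) ∧ stat t s (fun i => (π i : ℕ)) = r)).card


lemma count123_eq_sum {m : ℕ} (a : Fin m → ℕ) :
    count123 a = ∑ x, ∑ y, ∑ z,
      if (x < y ∧ y < z ∧ a x < a y ∧ a y < a z) then 1 else 0 := by
  rw [count123, Finset.card_filter, Fintype.sum_prod_type]
  exact Finset.sum_congr rfl fun x _ => by rw [Fintype.sum_prod_type]

lemma noninv_eq_sum {m : ℕ} (a : Fin m → ℕ) :
    noninv a = ∑ x, ∑ y, if (x < y ∧ a x < a y) then 1 else 0 := by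
  rw [noninv, Finset.card_filter, Fintype.sum_prod_type]

section Merge

variable {i j : ℕ} (α : Equiv.Perm (Fin i)) (β : Equiv.Perm (Fin j))

def mergeFun : Fin (i+1+j) → Fin (i+1+j) := fun x =>
  if h : (x : ℕ) < i then ⟨(α ⟨x, h⟩ : ℕ) + j, by have := (α ⟨x,h⟩).isLt; omega⟩
  else if h2 : (x : ℕ) = i then ⟨i + j, by omega⟩
  else ⟨(β ⟨(x : ℕ) - (i+1), by have := x.isLt; omega⟩ : ℕ), by
    have := (β ⟨(x : ℕ) - (i+1), by have := x.isLt; omega⟩).isLt; omega⟩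

lemma mergeFun_lt {x : Fin (i+1+j)} (h : (x : ℕ) < i) :
    (mergeFun α β x : ℕ) = (α ⟨x, h⟩ : ℕ) + j := by
  simp [mergeFun, h]

lemma mergeFun_eq {x : Fin (i+1+j)} (h : (x : ℕ) = i) :
    (mergeFun α β x : ℕ) = i + j := by
  simp [mergeFun, h]

lemma mergeFun_gt {x : Fin (i+1+j)} (h : i < (x : ℕ)) :
    (mergeFun α β x : ℕ)
      = (β ⟨(x : ℕ) - (i+1), by have := x.isLt; omega⟩ : ℕ) := by
  have h1 : ¬ ((x : ℕ) < i) := by omega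
  have h2 : ¬ ((x : ℕ) = i) := by omega
  simp [mergeFun, h1, h2]

lemma mergeFun_inj : Function.Injective (mergeFun α β) := by
  intro x y hxy
  have hxy' : (mergeFun α β x : ℕ) = (mergeFun α β y : ℕ) := by rw [hxy]
  have hx := x.isLt; have hy := y.isLt
  apply Fin.ext
  rcases lt_trichotomy (x : ℕ) i with h1 | h1 | h1 <;>
    rcases lt_trichotomy (y : ℕ) i with h2 | h2 | h2
  · rw [mergeFun_lt α β h1, mergeFun_lt α β h2] at hxy'
    have : α ⟨x, h1⟩ = α ⟨y, h2⟩ := Fin.ext (by omega)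
    have h3 := α.injective this
    have := congrArg Fin.val h3
    simp only [] at this
    omega
  · rw [mergeFun_lt α β h1, mergeFun_eq α β h2] at hxy'
    have := (α ⟨x, h1⟩).isLt; omega
  · rw [mergeFun_lt α β h1, mergeFun_gt α β h2] at hxy'
    have := (β ⟨(y : ℕ) - (i+1), by omega⟩).isLt; omega
  · rw [mergeFun_eq α β h1, mergeFun_lt α β h2] at hxy'
    have := (α ⟨y, h2⟩).isLt; omega
  · omega
  · rw [mergeFun_eq α β h1, mergeFun_gt α β h2] at hxy'
    have := (β ⟨(y : ℕ) - (i+1), by omega⟩).isLt; omega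
  · rw [mergeFun_gt α β h1, mergeFun_lt α β h2] at hxy'
    have := (β ⟨(x : ℕ) - (i+1), by omega⟩).isLt; omega
  · rw [mergeFun_gt α β h1, mergeFun_eq α β h2] at hxy'
    have := (β ⟨(x : ℕ) - (i+1), by omega⟩).isLt; omega
  · rw [mergeFun_gt α β h1, mergeFun_gt α β h2] at hxy'
    have : β ⟨(x : ℕ) - (i+1), by omega⟩ = β ⟨(y : ℕ) - (i+1), by omega⟩ :=
      Fin.ext (by omega)
    have := β.injective this
    have := congrArg Fin.val this
    simp only [] at this
    omega

noncomputable def mergePerm : Equiv.Perm (Fin (i+1+j)) :=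
  Equiv.ofBijective _ (Finite.injective_iff_bijective.mp (mergeFun_inj α β))

lemma mergePerm_lt {x : Fin (i+1+j)} (h : (x : ℕ) < i) :
    (mergePerm α β x : ℕ) = (α ⟨x, h⟩ : ℕ) + j := mergeFun_lt α β h

lemma mergePerm_eq {x : Fin (i+1+j)} (h : (x : ℕ) = i) :
    (mergePerm α β x : ℕ) = i + j := mergeFun_eq α β h

lemma mergePerm_gt {x : Fin (i+1+j)} (h : i < (x : ℕ)) :
    (mergePerm α β x : ℕ)
      = (β ⟨(x : ℕ) - (i+1), by have := x.isLt; omega⟩ : ℕ) := mergeFun_gt α β h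

lemma mergePerm_gt' {x : Fin (i+1+j)} (h : i < (x : ℕ)) (c : Fin j)
    (hc : (c : ℕ) = (x : ℕ) - (i+1)) :
    (mergePerm α β x : ℕ) = (β c : ℕ) := by
  rw [mergePerm_gt α β h]
  exact congrArg Fin.val (congrArg β (Fin.ext hc.symm))

lemma mergePerm_A_range {x : Fin (i+1+j)} (h : (x : ℕ) < i) :
    j ≤ (mergePerm α β x : ℕ) ∧ (mergePerm α β x : ℕ) < i + j := by
  rw [mergePerm_lt α β h]
  have := (α ⟨x, h⟩).isLt; omega

lemma mergePerm_B_range {x : Fin (i+1+j)} (h : i < (x : ℕ)) :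
    (mergePerm α β x : ℕ) < j := by
  obtain ⟨c, hc⟩ : ∃ c : Fin j, (c : ℕ) = (x : ℕ) - (i+1) :=
    ⟨⟨_, by have := x.isLt; omega⟩, rfl⟩
  rw [mergePerm_gt' α β h c hc]
  exact (β c).isLt


def inA (c : Fin i) : Fin (i+1+j) := ⟨c, by have := c.isLt; omega⟩

def topPos : Fin (i+1+j) := ⟨i, by omega⟩

def inB (c : Fin j) : Fin (i+1+j) := ⟨i+1+c, by have := c.isLt; omega⟩

variable {α β}

@[simp] lemma val_inA (c : Fin i) : ((inA (j := j) c) : ℕ) = c := rfl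
@[simp] lemma val_topPos : ((topPos (i := i) (j := j)) : ℕ) = i := rfl
@[simp] lemma val_inB (c : Fin j) : ((inB (i := i) c) : ℕ) = i+1+c := rfl

lemma sum_split (F : Fin (i+1+j) → ℕ) :
    ∑ x, F x = (∑ c : Fin i, F (inA c)) + F topPos + ∑ c : Fin j, F (inB c) := by
  rw [Fin.sum_univ_add (f := fun x : Fin ((i+1)+j) => F x), Fin.sum_univ_castSucc]
  have h1 : ∀ c : Fin i, F (Fin.castAdd j (Fin.castSucc c)) = F (inA c) :=
    fun c => congrArg F (Fin.ext rfl)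
  have h2 : F (Fin.castAdd j (Fin.last i)) = F topPos := congrArg F (Fin.ext rfl)
  have h3 : ∀ c : Fin j, F (Fin.natAdd (i+1) c) = F (inB c) :=
    fun c => congrArg F (Fin.ext rfl)
  simp only [h1, h2, h3]

@[simp] lemma M_inA (c : Fin i) :
    ((mergePerm α β (inA c)) : ℕ) = (α c : ℕ) + j := by
  rw [mergePerm_lt α β (show ((inA (j := j) c) : ℕ) < i from c.isLt)]
  exact congrArg (fun x : Fin i => (x : ℕ) + j) (congrArg α (Fin.ext rfl))

@[simp] lemma M_topPos : ((mergePerm α β topPos) : ℕ) = i + j :=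
  mergePerm_eq α β rfl

@[simp] lemma M_inB (c : Fin j) :
    ((mergePerm α β (inB c)) : ℕ) = (β c : ℕ) := by
  rw [mergePerm_gt α β (show i < ((inB (i := i) c) : ℕ) by simp; omega)]
  congr 1
  apply Fin.ext
  simp

-- helper simp facts
@[simp] lemma aux1 (u : Fin i) (v : Fin j) : ¬((u:ℕ) + j < (v:ℕ)) := by
  have := v.isLt; omega
@[simp] lemma aux3 (v : Fin i) : (v:ℕ) + j < i + j := by
  have := v.isLt; omega
@[simp] lemma aux4 (v : Fin j) : ¬(i + j < (v:ℕ)) := by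
  have := v.isLt; omega
@[simp] lemma aux5 (v : Fin i) : ¬(i + j < (v:ℕ) + j) := by
  have := v.isLt; omega
@[simp] lemma aux6 (c : Fin j) (c' : Fin i) : ¬(i+1+(c:ℕ) < (c':ℕ)) := by
  have := c'.isLt; omega
@[simp] lemma aux7 (c : Fin j) : ¬(i+1+(c:ℕ) < i) := by omega
@[simp] lemma aux8 (c : Fin i) : ¬(i < (c:ℕ)) := by have := c.isLt; omega
@[simp] lemma aux10 (c : Fin j) : i < i+1+(c:ℕ) := by omega
@[simp] lemma aux11 (c : Fin i) (c' : Fin j) : (c:ℕ) < i+1+(c':ℕ) := by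
  have := c.isLt; omega

lemma count123_merge :
    count123 (fun x => (mergePerm α β x : ℕ))
      = count123 (fun c => (α c : ℕ)) + noninv (fun c => (α c : ℕ))
        + count123 (fun c => (β c : ℕ)) := by
  rw [count123_eq_sum, count123_eq_sum, count123_eq_sum, noninv_eq_sum]
  simp only [sum_split]
  simp only [Fin.lt_def, val_inA, val_topPos, val_inB, M_inA, M_topPos, M_inB,
    aux1, aux3, aux4, aux5, aux6, aux7, aux8, aux10, aux11, Fin.is_lt,
    lt_irrefl, true_and, and_true, false_and, and_false, if_false, if_true,
    Finset.sum_const_zero, add_zero, zero_add, Nat.add_lt_add_iff_left,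
    Nat.add_lt_add_iff_right, ite_false, ite_true, Finset.sum_add_distrib,
    Finset.sum_const, smul_eq_mul, mul_one, Finset.card_univ, Fintype.card_fin]

lemma noninv_merge :
    noninv (fun x => (mergePerm α β x : ℕ))
      = noninv (fun c => (α c : ℕ)) + noninv (fun c => (β c : ℕ)) + i := by
  rw [noninv_eq_sum, noninv_eq_sum, noninv_eq_sum]
  simp only [sum_split]
  simp only [Fin.lt_def, val_inA, val_topPos, val_inB, M_inA, M_topPos, M_inB,
    aux1, aux3, aux4, aux5, aux6, aux7, aux8, aux10, aux11, Fin.is_lt,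
    lt_irrefl, true_and, and_true, false_and, and_false, if_false, if_true,
    Finset.sum_const_zero, add_zero, zero_add, Nat.add_lt_add_iff_left,
    Nat.add_lt_add_iff_right, ite_false, ite_true, Finset.sum_add_distrib,
    Finset.sum_const, smul_eq_mul, mul_one, Finset.card_univ, Fintype.card_fin]
  ring

lemma avoids_merge :
    Avoids132 (fun x => (mergePerm α β x : ℕ))
      ↔ Avoids132 (fun c => (α c : ℕ)) ∧ Avoids132 (fun c => (β c : ℕ)) := by
  constructor
  · intro hM
    constructor
    · intro c1 c2 c3 h12 h23 hv
      dsimp only at hv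
      refine hM (inA c1) (inA c2) (inA c3) ?_ ?_ ?_
      · exact h12
      · exact h23
      · simp only [M_inA]
        omega
    · intro c1 c2 c3 h12 h23 hv
      dsimp only at hv
      refine hM (inB c1) (inB c2) (inB c3) ?_ ?_ ?_
      · simp only [Fin.lt_def, val_inB]; have := Fin.lt_def.mp h12; omega
      · simp only [Fin.lt_def, val_inB]; have := Fin.lt_def.mp h23; omega
      · simp only [M_inB]
        omega
  · rintro ⟨hα, hβ⟩ x y z hxy hyz ⟨hv1, hv2⟩
    dsimp only at hv1 hv2
    have hxy' := Fin.lt_def.mp hxy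
    have hyz' := Fin.lt_def.mp hyz
    rcases lt_trichotomy ((y : ℕ)) i with hy | hy | hy
    · -- y in A, hence x in A
      have hx : (x : ℕ) < i := by omega
      have rx := mergePerm_A_range (α := α) (β := β) hx
      have ry := mergePerm_A_range (α := α) (β := β) hy
      rcases lt_trichotomy ((z : ℕ)) i with hz | hz | hz
      · have e1 := mergePerm_lt α β hx
        have e2 := mergePerm_lt α β hy
        have e3 := mergePerm_lt α β hz
        exact hα ⟨x, hx⟩ ⟨y, hy⟩ ⟨z, hz⟩ (Fin.mk_lt_mk.mpr hxy')
          (Fin.mk_lt_mk.mpr hyz') ⟨by dsimp only; omega, by dsimp only; omega⟩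
      · have e3 := mergePerm_eq α β hz
        omega
      · have rz := mergePerm_B_range (α := α) (β := β) hz
        omega
    · -- y = top
      have hx : (x : ℕ) < i := by omega
      have hz : i < (z : ℕ) := by omega
      have rx := mergePerm_A_range (α := α) (β := β) hx
      have rz := mergePerm_B_range (α := α) (β := β) hz
      omega
    · -- y in B, hence z in B
      have hz : i < (z : ℕ) := by omega
      have ry := mergePerm_B_range (α := α) (β := β) hy
      have rz := mergePerm_B_range (α := α) (β := β) hz
      rcases lt_trichotomy ((x : ℕ)) i with hx | hx | hx
      · have rx := mergePerm_A_range (α := α) (β := β) hx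
        omega
      · have e1 := mergePerm_eq α β hx
        omega
      · obtain ⟨cx, hcx⟩ : ∃ c : Fin j, (c : ℕ) = (x : ℕ) - (i+1) :=
          ⟨⟨_, by have := x.isLt; omega⟩, rfl⟩
        obtain ⟨cy, hcy⟩ : ∃ c : Fin j, (c : ℕ) = (y : ℕ) - (i+1) :=
          ⟨⟨_, by have := y.isLt; omega⟩, rfl⟩
        obtain ⟨cz, hcz⟩ : ∃ c : Fin j, (c : ℕ) = (z : ℕ) - (i+1) :=
          ⟨⟨_, by have := z.isLt; omega⟩, rfl⟩
        have e1 := mergePerm_gt' α β hx cx hcx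
        have e2 := mergePerm_gt' α β hy cy hcy
        have e3 := mergePerm_gt' α β hz cz hcz
        exact hβ cx cy cz (Fin.lt_def.mpr (by omega)) (Fin.lt_def.mpr (by omega))
          ⟨by dsimp only; omega, by dsimp only; omega⟩

lemma stat_merge (t s : ℕ) :
    stat t s (fun x => (mergePerm α β x : ℕ))
      = stat (t+1) (s+t) (fun c => (α c : ℕ)) + stat t s (fun c => (β c : ℕ)) + s := by
  simp only [stat, count123_merge, noninv_merge]
  ring

lemma merge_surj (π : Equiv.Perm (Fin (i+1+j)))
    (hA : Avoids132 (fun x => (π x : ℕ)))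
    (hmax : (π topPos : ℕ) = i + j) :
    ∃ (α : Equiv.Perm (Fin i)) (β : Equiv.Perm (Fin j)), mergePerm α β = π := by
  have hmax' : ∀ x : Fin (i+1+j), (x : ℕ) ≠ i → (π x : ℕ) < i + j := by
    intro x hx
    have h1 : π x ≠ π topPos := fun h => hx (congrArg Fin.val (π.injective h))
    have h2 := (π x).isLt
    have h3 : (π x : ℕ) ≠ i + j := fun h => h1 (Fin.ext (by rw [h, hmax]))
    omega
  have key1 : ∀ (c : Fin i) (c' : Fin j), (π (inB c') : ℕ) < (π (inA c) : ℕ) := by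
    intro c c'
    by_contra hcon
    push_neg at hcon
    have hne : (π (inA c) : ℕ) ≠ (π (inB c') : ℕ) := by
      intro h
      have h2 := congrArg Fin.val (π.injective (Fin.ext h))
      simp only [val_inA, val_inB] at h2
      omega
    have hyv : (π (inB c') : ℕ) < i + j := hmax' (inB c') (by simp; omega)
    exact hA (inA c) topPos (inB c')
      (Fin.lt_def.mpr (by simp [c.isLt]))
      (Fin.lt_def.mpr (by simp))
      ⟨by dsimp only; omega, by dsimp only; rw [hmax]; omega⟩
  have key2 : ∀ c' : Fin j, (π (inB c') : ℕ) < j := by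
    intro c'
    have hsub : Finset.image (fun x : Fin (i+1) => (π ⟨x, by have := x.isLt; omega⟩ : ℕ))
        Finset.univ ⊆ Finset.Ioc ((π (inB c') : ℕ)) (i + j) := by
      intro v hv
      simp only [Finset.mem_image, Finset.mem_univ, true_and] at hv
      obtain ⟨x, rfl⟩ := hv
      rcases lt_or_eq_of_le (Nat.lt_succ_iff.mp x.isLt) with hx | hx
      · have h1 : (⟨(x : ℕ), by omega⟩ : Fin (i+1+j)) = inA ⟨x, hx⟩ := Fin.ext rfl
        rw [h1]
        have h2 := key1 ⟨x, hx⟩ c'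
        have h3 := hmax' (inA ⟨x, hx⟩) (by simp; omega)
        simp only [Finset.mem_Ioc]
        omega
      · have h1 : (⟨(x : ℕ), by omega⟩ : Fin (i+1+j)) = topPos := Fin.ext hx
        rw [h1, hmax]
        simp only [Finset.mem_Ioc]
        have h2 : (π (inB c') : ℕ) ≠ i + j := by
          intro h
          have := congrArg Fin.val (π.injective (Fin.ext (h.trans hmax.symm)))
          simp only [val_inB, val_topPos] at this
          omega
        have := (π (inB c')).isLt
        omega
    have hcard := Finset.card_le_card hsub
    have hinj : Function.Injective
        (fun x : Fin (i+1) => (π ⟨x, by have := x.isLt; omega⟩ : ℕ)) := by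
      intro u v huv
      have := congrArg Fin.val (π.injective (Fin.ext huv))
      exact Fin.ext (by simpa using this)
    rw [Finset.card_image_of_injective _ hinj] at hcard
    simp only [Finset.card_univ, Fintype.card_fin, Nat.card_Ioc] at hcard
    omega
  have key3 : ∀ c : Fin i, j ≤ (π (inA c) : ℕ) := by
    intro c
    have hsub : Finset.image (fun c' : Fin j => (π (inB c') : ℕ)) Finset.univ
        ⊆ Finset.range ((π (inA c) : ℕ)) := by
      intro v hv
      simp only [Finset.mem_image, Finset.mem_univ, true_and] at hv
      obtain ⟨c', rfl⟩ := hv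
      simp only [Finset.mem_range]
      exact key1 c c'
    have hcard := Finset.card_le_card hsub
    have hinj : Function.Injective (fun c' : Fin j => (π (inB c') : ℕ)) := by
      intro u v huv
      have := congrArg Fin.val (π.injective (Fin.ext huv))
      simp only [val_inB] at this
      exact Fin.ext (by omega)
    rw [Finset.card_image_of_injective _ hinj] at hcard
    simp only [Finset.card_univ, Fintype.card_fin, Finset.card_range] at hcard
    omega
  have key4 : ∀ c : Fin i, (π (inA c) : ℕ) < i + j := fun c =>
    hmax' (inA c) (by simp only [val_inA]; have := c.isLt; omega)
  -- build α and β
  have faInj : Function.Injective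
      (fun c : Fin i => (⟨(π (inA c) : ℕ) - j, by have := key3 c; have := key4 c; omega⟩ : Fin i)) := by
    intro u v huv
    have h1 := congrArg Fin.val huv
    simp only [] at h1
    have h2 : (π (inA u) : ℕ) = (π (inA v) : ℕ) := by
      have := key3 u; have := key3 v; omega
    have := congrArg Fin.val (π.injective (Fin.ext h2))
    simp only [val_inA] at this
    exact Fin.ext this
  have fbInj : Function.Injective
      (fun c : Fin j => (⟨(π (inB c) : ℕ), key2 c⟩ : Fin j)) := by
    intro u v huv
    have h1 := congrArg Fin.val huv
    simp only [] at h1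
    have := congrArg Fin.val (π.injective (Fin.ext h1))
    simp only [val_inB] at this
    exact Fin.ext (by omega)
  refine ⟨Equiv.ofBijective _ (Finite.injective_iff_bijective.mp faInj),
          Equiv.ofBijective _ (Finite.injective_iff_bijective.mp fbInj), ?_⟩
  apply Equiv.ext
  intro x
  apply Fin.ext
  rcases lt_trichotomy ((x : ℕ)) i with hx | hx | hx
  · rw [mergePerm_lt _ _ hx]
    have h1 : inA (j := j) ⟨(x : ℕ), hx⟩ = x := Fin.ext rfl
    have h2 : ((Equiv.ofBijective _ (Finite.injective_iff_bijective.mp faInj)) ⟨(x:ℕ), hx⟩ : ℕ)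
        = (π (inA ⟨(x:ℕ), hx⟩) : ℕ) - j := rfl
    rw [h2, h1]
    have := key3 ⟨(x:ℕ), hx⟩
    rw [h1] at this
    omega
  · have h1 : x = topPos := Fin.ext hx
    rw [mergePerm_eq _ _ hx, h1, hmax]
  · obtain ⟨cx, hcx⟩ : ∃ c : Fin j, (c : ℕ) = (x : ℕ) - (i+1) :=
      ⟨⟨_, by have := x.isLt; omega⟩, rfl⟩
    rw [mergePerm_gt' _ _ hx cx hcx]
    have h1 : inB (i := i) cx = x := Fin.ext (by simp only [val_inB]; omega)
    have h2 : ((Equiv.ofBijective _ (Finite.injective_iff_bijective.mp fbInj)) cx : ℕ)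
        = (π (inB cx) : ℕ) := rfl
    rw [h2, h1]

lemma merge_inj : Function.Injective2 (@mergePerm i j) := by
  intro α α' β β' h
  constructor
  · apply Equiv.ext
    intro c
    have h1 : ((mergePerm α β (inA c)) : ℕ) = ((mergePerm α' β' (inA c)) : ℕ) := by rw [h]
    rw [M_inA, M_inA] at h1
    exact Fin.ext (by omega)
  · apply Equiv.ext
    intro c
    have h1 : ((mergePerm α β (inB c)) : ℕ) = ((mergePerm α' β' (inB c)) : ℕ) := by rw [h]
    rw [M_inB, M_inB] at h1
    exact Fin.ext h1

end Merge

lemma hcount_zero (t s r : ℕ) : hcount t s r 0 = if r = 0 then 1 else 0 := by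
  classical
  have h1 : ∀ π : Equiv.Perm (Fin 0),
      (Avoids132 (fun i => (π i : ℕ)) ∧ stat t s (fun i => (π i : ℕ)) = r) ↔ r = 0 := by
    intro π
    have hav : Avoids132 (fun i => (π i : ℕ)) := fun i => i.elim0
    have hc : count123 (fun i => (π i : ℕ)) = 0 := by
      rw [count123, Finset.card_eq_zero, Finset.filter_eq_empty_iff]
      intro x _
      exact fun _ => Fin.elim0 x.1
    have hni : noninv (fun i => (π i : ℕ)) = 0 := by
      rw [noninv, Finset.card_eq_zero, Finset.filter_eq_empty_iff]
      intro x _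
      exact fun _ => Fin.elim0 x.1
    simp [hav, stat, hc, hni, eq_comm]
  rw [hcount]
  rcases eq_or_ne r 0 with rfl | hr
  · rw [if_pos rfl]
    rw [Finset.filter_true_of_mem (fun π _ => (h1 π).mpr rfl)]
    simp
  · rw [if_neg hr]
    rw [Finset.card_eq_zero, Finset.filter_eq_empty_iff]
    intro π _
    rw [h1 π]
    exact hr

open scoped Classical in
lemma fiber_card (t s r i j : ℕ) (hsr : s ≤ r) (mt : Fin (i+1+j)) (hmt : (mt : ℕ) = i + j) :
    (Finset.univ.filter (fun π : Equiv.Perm (Fin (i+1+j)) =>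
      (Avoids132 (fun x => (π x : ℕ)) ∧ stat t s (fun x => (π x : ℕ)) = r) ∧
      ((π.symm mt : Fin (i+1+j)) : ℕ) = i)).card
    = ∑ p ∈ Finset.HasAntidiagonal.antidiagonal (r - s),
        hcount (t+1) (s+t) p.1 i * hcount t s p.2 j := by
  classical
  have hcond : ∀ π : Equiv.Perm (Fin (i+1+j)),
      (((π.symm mt : Fin (i+1+j)) : ℕ) = i) ↔ ((π topPos : ℕ) = i + j) := by
    intro π
    constructor
    · intro h
      have h2 : π.symm mt = topPos := Fin.ext h
      rw [← h2, Equiv.apply_symm_apply, hmt]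
    · intro h
      have h2 : π topPos = mt := Fin.ext (by rw [h, hmt])
      rw [← h2, Equiv.symm_apply_apply]
      rfl
  rw [Finset.filter_congr (fun π _ => by rw [hcond π])]
  -- bijection with pairs
  have hbij := Finset.card_bij
    (s := (Finset.univ ×ˢ Finset.univ).filter
      (fun ab : Equiv.Perm (Fin i) × Equiv.Perm (Fin j) =>
        Avoids132 (fun c => (ab.1 c : ℕ)) ∧ Avoids132 (fun c => (ab.2 c : ℕ)) ∧
        stat (t+1) (s+t) (fun c => (ab.1 c : ℕ)) + stat t s (fun c => (ab.2 c : ℕ)) + s = r))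
    (t := Finset.univ.filter (fun π : Equiv.Perm (Fin (i+1+j)) =>
      (Avoids132 (fun x => (π x : ℕ)) ∧ stat t s (fun x => (π x : ℕ)) = r) ∧
      ((π topPos : ℕ) = i + j)))
    (fun ab _ => mergePerm ab.1 ab.2)
    (by
      rintro ⟨a, b⟩ hab
      rw [Finset.mem_filter] at hab
      dsimp only at hab
      obtain ⟨-, h1, h2, h3⟩ := hab
      rw [Finset.mem_filter]
      refine ⟨Finset.mem_univ _, ⟨(avoids_merge).mpr ⟨h1, h2⟩, ?_⟩, M_topPos⟩
      dsimp only
      rw [stat_merge]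
      omega)
    (by
      rintro ⟨a, b⟩ _ ⟨a', b'⟩ _ h
      have := merge_inj h
      simp only [Prod.mk.injEq]
      exact ⟨this.1, this.2⟩)
    (by
      intro π hπ
      rw [Finset.mem_filter] at hπ
      obtain ⟨-, ⟨hAv, hstat⟩, hmax⟩ := hπ
      obtain ⟨a, b, hab⟩ := merge_surj π hAv hmax
      refine ⟨(a, b), ?_, hab⟩
      rw [Finset.mem_filter]
      have hAv' : Avoids132 (fun x => ((mergePerm a b) x : ℕ)) := by rw [hab]; exact hAv
      obtain ⟨h1, h2⟩ := (avoids_merge).mp hAv'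
      have h3 := stat_merge (α := a) (β := b) t s
      rw [hab, hstat] at h3
      exact ⟨by simp, h1, h2, by dsimp only; omega⟩)
  rw [← hbij]
  -- now fiberwise over the pair statistics
  rw [Finset.card_eq_sum_card_fiberwise
    (f := fun ab : Equiv.Perm (Fin i) × Equiv.Perm (Fin j) =>
      (stat (t+1) (s+t) (fun c => (ab.1 c : ℕ)), stat t s (fun c => (ab.2 c : ℕ))))
    (t := Finset.HasAntidiagonal.antidiagonal (r - s))
    (by
      rintro ⟨a, b⟩ hab
      rw [Finset.mem_coe, Finset.mem_filter] at hab
      dsimp only at hab ⊢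
      rw [Finset.mem_coe, Finset.HasAntidiagonal.mem_antidiagonal]
      omega)]
  apply Finset.sum_congr rfl
  rintro ⟨p1, p2⟩ hp
  rw [Finset.HasAntidiagonal.mem_antidiagonal] at hp
  rw [Finset.filter_filter]
  rw [Finset.filter_congr (q := fun ab : Equiv.Perm (Fin i) × Equiv.Perm (Fin j) =>
      (Avoids132 (fun c => (ab.1 c : ℕ)) ∧ stat (t+1) (s+t) (fun c => (ab.1 c : ℕ)) = p1) ∧
      (Avoids132 (fun c => (ab.2 c : ℕ)) ∧ stat t s (fun c => (ab.2 c : ℕ)) = p2))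
    (by
      rintro ⟨a, b⟩ -
      dsimp only
      simp only [Prod.mk.injEq]
      constructor
      · rintro ⟨⟨h1, h2, h3⟩, h4, h5⟩
        exact ⟨⟨h1, h4⟩, ⟨h2, h5⟩⟩
      · rintro ⟨⟨h1, h4⟩, ⟨h2, h5⟩⟩
        exact ⟨⟨h1, h2, by omega⟩, by omega, by omega⟩)]
  rw [Finset.filter_product
    (p := fun a : Equiv.Perm (Fin i) =>
      Avoids132 (fun c => (a c : ℕ)) ∧ stat (t+1) (s+t) (fun c => (a c : ℕ)) = p1)
    (q := fun b : Equiv.Perm (Fin j) =>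
      Avoids132 (fun c => (b c : ℕ)) ∧ stat t s (fun c => (b c : ℕ)) = p2),
    Finset.card_product]
  rw [hcount, hcount]

lemma hcount_rec (t s r n : ℕ) (hn : 1 ≤ n) (hsr : s ≤ r) :
    hcount t s r n
      = ∑ p ∈ Finset.HasAntidiagonal.antidiagonal (r - s), ∑ q ∈ Finset.HasAntidiagonal.antidiagonal (n - 1),
          hcount (t+1) (s+t) p.1 q.1 * hcount t s p.2 q.2 := by
  classical
  rw [Finset.sum_comm]
  have hrhs : ∀ F : ℕ × ℕ → ℕ, ∑ q ∈ Finset.HasAntidiagonal.antidiagonal (n-1), F q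
      = ∑ k ∈ Finset.range n, F (k, n-1-k) := by
    intro F
    rw [Finset.Nat.sum_antidiagonal_eq_sum_range_succ_mk]
    have : (n - 1).succ = n := by omega
    rw [this]
  rw [hrhs]
  rw [hcount]
  rw [Finset.card_eq_sum_card_fiberwise
    (f := fun π : Equiv.Perm (Fin n) => ((π.symm ⟨n-1, by omega⟩ : Fin n) : ℕ))
    (t := Finset.range n)
    (by intro π _; rw [Finset.mem_coe, Finset.mem_range]; exact (π.symm _).isLt)]
  apply Finset.sum_congr rfl
  intro i hi
  rw [Finset.mem_range] at hi
  obtain ⟨j, rfl⟩ : ∃ j, n = i+1+j := ⟨n-1-i, by omega⟩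
  rw [Finset.filter_filter]
  have hj : i+1+j-1-i = j := by omega
  rw [hj]
  have := fiber_card t s r i j hsr ⟨i+1+j-1, by omega⟩ (by show i+1+j-1 = i+j; omega)
  rw [← this]

lemma hcount_small (t s r n : ℕ) (hn : 1 ≤ n) (hsr : r < s) :
    hcount t s r n = 0 := by
  classical
  rw [hcount, Finset.card_eq_zero, Finset.filter_eq_empty_iff]
  rintro π _ ⟨_, hstat⟩
  rw [stat] at hstat
  have : s ≤ s * n := Nat.le_mul_of_pos_right s hn
  omega

/-- the list of numerators -/
noncomputable def numList (t s m : ℕ) : List (MvPowerSeries (Fin 2) ℤ) :=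
  (List.range m).map (fun k =>
    MvPowerSeries.X 1 * MvPowerSeries.X 0 ^ (t * k + k.choose 2 + s))

noncomputable def coeffD (r n : ℕ) : MvPowerSeries (Fin 2) ℤ → ℤ :=
  MvPowerSeries.coeff (R := ℤ) (Finsupp.single (0 : Fin 2) r + Finsupp.single 1 n)

lemma coeffD_add (r n : ℕ) (φ ψ : MvPowerSeries (Fin 2) ℤ) :
    coeffD r n (φ + ψ) = coeffD r n φ + coeffD r n ψ := map_add _ _ _

lemma fin2_decomp (d : Fin 2 →₀ ℕ) :
    d = Finsupp.single 0 (d 0) + Finsupp.single 1 (d 1) := by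
  ext a
  fin_cases a <;> simp [Finsupp.single_apply]

lemma coeffD_mul (r n : ℕ) (φ ψ : MvPowerSeries (Fin 2) ℤ) :
    coeffD r n (φ * ψ) = ∑ p ∈ Finset.HasAntidiagonal.antidiagonal r, ∑ q ∈ Finset.HasAntidiagonal.antidiagonal n,
      coeffD p.1 q.1 φ * coeffD p.2 q.2 ψ := by
  classical
  rw [coeffD, MvPowerSeries.coeff_mul, ← Finset.sum_product']
  apply Finset.sum_nbij' (i := fun pq : (Fin 2 →₀ ℕ) × (Fin 2 →₀ ℕ) =>
      ((pq.1 0, pq.2 0), (pq.1 1, pq.2 1)))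
    (j := fun x : (ℕ × ℕ) × (ℕ × ℕ) =>
      (Finsupp.single 0 x.1.1 + Finsupp.single 1 x.2.1,
       Finsupp.single 0 x.1.2 + Finsupp.single 1 x.2.2))
  · intro a ha
    rw [Finset.HasAntidiagonal.mem_antidiagonal] at ha
    have h0 := DFunLike.congr_fun ha 0
    have h1 := DFunLike.congr_fun ha 1
    simp only [Finsupp.add_apply, Finsupp.coe_add, Pi.add_apply] at h0 h1
    simp only [Finsupp.single_apply] at h0 h1
    norm_num at h0 h1
    simp only [Finset.mem_product, Finset.HasAntidiagonal.mem_antidiagonal]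
    exact ⟨h0, h1⟩
  · intro b hb
    simp only [Finset.mem_product, Finset.HasAntidiagonal.mem_antidiagonal] at hb
    rw [Finset.HasAntidiagonal.mem_antidiagonal]
    ext a
    fin_cases a <;>
      simp [Finsupp.single_apply] <;> omega
  · intro a ha
    have e1 := fin2_decomp a.1
    have e2 := fin2_decomp a.2
    exact Prod.ext e1.symm e2.symm
  · intro b hb
    simp [Finsupp.single_apply]
  · intro a ha
    rw [coeffD, coeffD, ← fin2_decomp, ← fin2_decomp]

lemma coeffD_one (r n : ℕ) :
    coeffD r n (1 : MvPowerSeries (Fin 2) ℤ) = if r = 0 ∧ n = 0 then 1 else 0 := by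
  classical
  rw [coeffD, MvPowerSeries.coeff_one]
  have h : (Finsupp.single (0 : Fin 2) r + Finsupp.single 1 n = 0) ↔ (r = 0 ∧ n = 0) := by
    constructor
    · intro h
      have h0 := DFunLike.congr_fun h 0
      have h1 := DFunLike.congr_fun h 1
      simp [Finsupp.single_apply] at h0 h1
      exact ⟨h0, h1⟩
    · rintro ⟨rfl, rfl⟩
      simp
  rw [if_congr h rfl rfl]

lemma xmon (e : ℕ) : (MvPowerSeries.X 1 * MvPowerSeries.X 0 ^ e : MvPowerSeries (Fin 2) ℤ)
    = MvPowerSeries.monomial (R := ℤ) (Finsupp.single 1 1 + Finsupp.single 0 e) 1 := by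
  rw [MvPowerSeries.X_pow_eq, MvPowerSeries.X, MvPowerSeries.monomial_mul_monomial, one_mul]

lemma coeffD_xmul (e r n : ℕ) (M : MvPowerSeries (Fin 2) ℤ) :
    coeffD r n ((MvPowerSeries.X 1 * MvPowerSeries.X 0 ^ e) * M)
      = if e ≤ r ∧ 1 ≤ n then coeffD (r - e) (n - 1) M else 0 := by
  classical
  rw [xmon, coeffD, MvPowerSeries.coeff_monomial_mul]
  have hle : (Finsupp.single (1 : Fin 2) 1 + Finsupp.single 0 e
      ≤ Finsupp.single (0 : Fin 2) r + Finsupp.single 1 n) ↔ (e ≤ r ∧ 1 ≤ n) := by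
    rw [Finsupp.le_def]
    constructor
    · intro h
      have h0 := h 0
      have h1 := h 1
      simp [Finsupp.single_apply] at h0 h1
      exact ⟨h0, h1⟩
    · rintro ⟨h1, h2⟩ a
      fin_cases a <;> simp [Finsupp.single_apply] <;> omega
  rcases em (e ≤ r ∧ 1 ≤ n) with h | h
  · rw [if_pos (hle.mpr h), if_pos h, one_mul, coeffD]
    have hidx : (Finsupp.single (0 : Fin 2) r + Finsupp.single 1 n)
        - (Finsupp.single (1 : Fin 2) 1 + Finsupp.single 0 e)
        = Finsupp.single (0 : Fin 2) (r-e) + Finsupp.single 1 (n-1) := by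
      ext a
      fin_cases a <;>
        · simp [Finsupp.tsub_apply, Finsupp.single_apply]
    rw [hidx]
  · rw [if_neg (fun hc => h (hle.mp hc)), if_neg h]

lemma constCoeff_num (e : ℕ) :
    MvPowerSeries.constantCoeff (σ := Fin 2) (R := ℤ) (MvPowerSeries.X 1 * MvPowerSeries.X 0 ^ e) = 0 := by
  simp [map_mul, map_pow, MvPowerSeries.constantCoeff_X]

lemma cfrac_eq (a : MvPowerSeries (Fin 2) ℤ) (rest : List (MvPowerSeries (Fin 2) ℤ))
    (ha : MvPowerSeries.constantCoeff (σ := Fin 2) (R := ℤ) a = 0) :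
    cfrac (a :: rest) = 1 + a * cfrac rest * cfrac (a :: rest) := by
  have h1 : MvPowerSeries.constantCoeff (σ := Fin 2) (R := ℤ) (1 - a * cfrac rest) = ((1 : ℤˣ) : ℤ) := by
    simp [map_sub, map_mul, ha]
  have h2 := MvPowerSeries.mul_invOfUnit (1 - a * cfrac rest) 1 h1
  have hC : cfrac (a :: rest) = MvPowerSeries.invOfUnit (1 - a * cfrac rest) 1 := rfl
  rw [hC] at *
  linear_combination h2

lemma numList_succ (t s m : ℕ) :
    numList t s (m+1) = (MvPowerSeries.X 1 * MvPowerSeries.X 0 ^ s) :: numList (t+1) (s+t) m := by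
  rw [numList, List.range_succ_eq_map, List.map_cons, List.map_map, numList]
  congr 1
  · norm_num
  · apply List.map_congr_left
    intro k _
    simp only [Function.comp_apply]
    congr 1
    have h1 : (k+1).choose 2 = k.choose 2 + k := by
      rw [Nat.choose_two_right, Nat.choose_two_right, Nat.triangle_succ]
    rw [h1, Nat.mul_succ]
    ring

lemma coeffD_cfrac_zero (r : ℕ) : ∀ m t s : ℕ,
    coeffD r 0 (cfrac (numList t s m)) = if r = 0 then 1 else 0 := by
  intro m
  induction m with
  | zero =>
    intro t s
    have : numList t s 0 = [] := by simp [numList]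
    rw [this]
    show coeffD r 0 (1 : MvPowerSeries (Fin 2) ℤ) = _
    rw [coeffD_one]
    simp
  | succ m ih =>
    intro t s
    rw [numList_succ, cfrac_eq _ _ (constCoeff_num s), coeffD_add, coeffD_one, mul_assoc,
      coeffD_xmul]
    rw [if_neg (show ¬(s ≤ r ∧ 1 ≤ 0) by omega)]
    simp

lemma main_ind (n : ℕ) : ∀ t s m r : ℕ, n ≤ m →
    coeffD r n (cfrac (numList t s m)) = (hcount t s r n : ℤ) := by
  induction n using Nat.strong_induction_on with
  | _ n IH =>
    intro t s m r hnm
    rcases Nat.eq_zero_or_pos n with rfl | hn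
    · rw [coeffD_cfrac_zero, hcount_zero]
      by_cases hr : r = 0 <;> simp [hr]
    · obtain ⟨m', rfl⟩ : ∃ m', m = m'+1 := ⟨m-1, by omega⟩
      rw [numList_succ, cfrac_eq _ _ (constCoeff_num s), coeffD_add, coeffD_one, mul_assoc,
        coeffD_xmul, ← numList_succ]
      rw [if_neg (by omega)]
      rcases le_or_gt s r with hsr | hrs
      · rw [if_pos ⟨hsr, hn⟩, coeffD_mul, hcount_rec t s r n hn hsr]
        push_cast
        rw [zero_add]
        apply Finset.sum_congr rfl
        intro p hp
        apply Finset.sum_congr rfl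
        intro q hq
        rw [Finset.HasAntidiagonal.mem_antidiagonal] at hp hq
        rw [IH q.1 (by omega) (t+1) (s+t) m' p.1 (by omega),
          IH q.2 (by omega) t s (m'+1) p.2 (by omega)]
      · rw [if_neg (by omega), hcount_small t s r n hn hrs]
        simp

/-- In `ℤ[[q,z]]` (variables: `0 ↦ q`, `1 ↦ z`), for every `m ≥ 1` and every
`n ≤ m`, the coefficient of `zⁿ` in the depth-`m` continued fraction
`C_m(q,z) = 1/(1 - a₁/(1 - a₂/(⋯/(1 - a_m))))` with `k`-th partial numerator
`a_k = z·q^{binomial(k-1,2)}` equals `Σ_{r≥0} f_r(n) q^r`; i.e. its coefficient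
of `q^r zⁿ` is `f_r(n)` for every `r`.  Thus `Σ_{n,r} f_r(n) zⁿ q^r` is
represented by the infinite continued fraction
`1/(1 - z/(1 - z/(1 - zq/(1 - zq³/(1 - zq⁶/⋯)))))` with `n`-th numerator
`z·q^{binomial(n,2)}`. -/
theorem stmt6 (m n : ℕ) (hm : 1 ≤ m) (hnm : n ≤ m) (r : ℕ) :
    MvPowerSeries.coeff (R := ℤ) (Finsupp.single 0 r + Finsupp.single 1 n)
      (cfrac ((List.range m).map
        (fun k => MvPowerSeries.X 1 * MvPowerSeries.X 0 ^ (k.choose 2)))) =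
    (f r n : ℤ) := by
  have h1 : coeffD r n (cfrac (numList 0 0 m)) = (hcount 0 0 r n : ℤ) :=
    main_ind n 0 0 m r hnm
  have h2 : numList 0 0 m = (List.range m).map
      (fun k => MvPowerSeries.X 1 * MvPowerSeries.X 0 ^ (k.choose 2)) := by
    simp [numList]
  have h3 : f r n = hcount 0 0 r n := by
    classical
    rw [f, hcount, Nat.card_eq_fintype_card, Fintype.card_subtype]
    congr 1
    apply Finset.filter_congr
    intro π _
    simp [stat]
  rw [← h2, h3]
  exact h1
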